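/- Let 𝒬 be an intersection compatible pseudo-prime system in an excellent local ring (R, m, k), and let R̂ denote the m-adic completion of R. Then the pseudo-prime system 𝒬R̂ := { QR̂ : Q ∈ 𝒬 } in R̂ is again intersection compatible. -/

import Mathlib

open IsLocalRing TensorProduct

universe u

section Defs

variable (R : Type u) [CommRing R]

/-- The embedding dimension of a Noetherian local ring: `dim_k (m/m²)`. -/
noncomputable def embDim [IsLocalRing R] : ℕ :=
  Module.finrank (ResidueField R) (CotangentSpace R)

/-- A Noetherian local ring is regular if its embedding dimension equals its Krull dimension. -/
def IsRegularLocal [IsLocalRing R] : Prop :=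
  IsNoetherianRing R ∧ (embDim R : WithBot ℕ∞) = ringKrullDim R

/-- A (not necessarily local) commutative ring is regular if it is Noetherian and all of its
localizations at primes are regular local rings. -/
def IsRegularRing' : Prop :=
  IsNoetherianRing R ∧ ∀ (p : Ideal R) (_ : p.IsPrime), IsRegularLocal (Localization.AtPrime p)

/-- An algebra `A` over a field `k` is geometrically regular if `L ⊗ₖ A` is a regular ring for
every finite field extension `L` of `k`. -/
def IsGeomRegularAlgebra (k : Type u) (A : Type u) [Field k] [CommRing A] [Algebra k A] : Prop :=
  ∀ (L : Type u) [Field L] [Algebra k L], Module.Finite k L → IsRegularRing' (L ⊗[k] A)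

/-- A chain of primes is saturated if each step is a covering relation. -/
def IsSaturatedChain {α : Type u} [Preorder α] (c : LTSeries α) : Prop :=
  ∀ i : Fin c.length, c.toFun i.castSucc ⋖ c.toFun i.succ

/-- A ring is catenary if any two saturated chains of primes with the same endpoints have the
same length. -/
def IsCatenary : Prop :=
  ∀ c₁ c₂ : LTSeries (PrimeSpectrum R), c₁.head = c₂.head → c₁.last = c₂.last →
    IsSaturatedChain c₁ → IsSaturatedChain c₂ → c₁.length = c₂.length

/-- A ring is universally catenary if every finite type algebra over it is catenary. -/
def IsUniversallyCatenary : Prop :=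
  ∀ (S : Type u) [CommRing S] [Algebra R S], Algebra.FiniteType R S → IsCatenary S

/-- The residue field of a ring at a prime ideal. -/
abbrev residueFieldAt (q : Ideal R) [q.IsPrime] : Type u :=
  ResidueField (Localization.AtPrime q)

/-- A ring is a G-ring if, for every prime `p`, the formal fibers of `R_p` (the fibers of the
map from `R_p` to its `maximal-adic` completion, over the primes `q ⊆ p` of `R`) are
geometrically regular over the residue fields `κ(q)`. -/
def IsGRing : Prop :=
  ∀ (p : Ideal R) (_ : p.IsPrime) (q : Ideal R) (_ : q.IsPrime), q ≤ p →
    letI Rp := Localization.AtPrime p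
    letI Rphat := AdicCompletion (maximalIdeal Rp) Rp
    letI : Algebra R Rphat :=
      ((algebraMap Rp Rphat).comp (algebraMap R Rp)).toAlgebra
    letI : Algebra R (residueFieldAt R q) :=
      ((algebraMap (Localization.AtPrime q) (residueFieldAt R q)).comp
        (algebraMap R (Localization.AtPrime q))).toAlgebra
    letI : Module R Rphat := Algebra.toModule
    letI : Module R (residueFieldAt R q) := Algebra.toModule
    IsGeomRegularAlgebra (residueFieldAt R q) ((residueFieldAt R q) ⊗[R] Rphat)

/-- A ring is J-2 if the regular locus of every finite type algebra over it is open. -/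
def IsJ2 : Prop :=
  ∀ (S : Type u) [CommRing S] [Algebra R S], Algebra.FiniteType R S →
    IsOpen {p : PrimeSpectrum S | IsRegularLocal (Localization.AtPrime p.asIdeal)}

/-- A ring is excellent if it is Noetherian, universally catenary, a G-ring, and J-2. -/
def IsExcellentRing : Prop :=
  IsNoetherianRing R ∧ IsUniversallyCatenary R ∧ IsGRing R ∧ IsJ2 R

/-- A proper ideal of a local ring is equidimensional if all of its minimal primes have the same
coheight. -/
def IsEquidimensionalIdeal (Q : Ideal R) : Prop :=
  ∀ P ∈ Q.minimalPrimes, ringKrullDim (R ⧸ P) = ringKrullDim (R ⧸ Q)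

/-- A set of ideals of a local ring is a pseudo-prime system if each of its members is a proper
radical equidimensional ideal, and whenever some minimal prime of one member is contained in a
minimal prime of another, the first member is contained in the second. -/
def IsPseudoPrimeSystem (𝒬 : Set (Ideal R)) : Prop :=
  (∀ Q ∈ 𝒬, Q ≠ ⊤ ∧ Q.IsRadical ∧ IsEquidimensionalIdeal R Q) ∧
    ∀ Q₁ ∈ 𝒬, ∀ Q₂ ∈ 𝒬,
      (∃ P₁ ∈ Q₁.minimalPrimes, ∃ P₂ ∈ Q₂.minimalPrimes, P₁ ≤ P₂) → Q₁ ≤ Q₂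

/-- `e(R, 𝒬, d)`: the number of ideals in `𝒬` of coheight `d`. -/
noncomputable def sysCount (𝒬 : Set (Ideal R)) (d : ℕ) : ℕ :=
  {Q ∈ 𝒬 | ringKrullDim (R ⧸ Q) = (d : WithBot ℕ∞)}.ncard

/-- The set of all intersections of finite nonempty subcollections of `𝒬`. -/
def finiteIntersections (𝒬 : Set (Ideal R)) : Set (Ideal R) :=
  {I | ∃ α : Finset (Ideal R), α.Nonempty ∧ ↑α ⊆ 𝒬 ∧ I = α.inf id}

/-- A pseudo-prime system `𝒬` is intersection compatible if the set of intersections of finite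
nonempty subcollections of `𝒬` is closed under (finite) sums. -/
def IsIntersectionCompatible (𝒬 : Set (Ideal R)) : Prop :=
  ∀ I ∈ finiteIntersections R 𝒬, ∀ J ∈ finiteIntersections R 𝒬,
    I + J ∈ finiteIntersections R 𝒬

end Defs

/-! The `m`-adic completion `R̂` of a Noetherian local ring is flat over `R`, and extension of
ideals along a flat algebra commutes with finite intersections (tensor the injection
`R ⧸ ⋂ Iᵢ ↪ ∏ R ⧸ Iᵢ` with `R̂`) as well as with sums. Hence extension maps the finite
intersections of `𝒬` onto those of `𝒬R̂`, and closure under sums passes from the former to the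
latter. -/

section Flat

variable {R : Type*} [CommRing R]

theorem TensorProduct.tmul_one_quotient_eq_zero_iff {M : Type*} [AddCommGroup M] [Module R M]
    (I : Ideal R) (x : M) : x ⊗ₜ[R] (1 : R ⧸ I) = 0 ↔ x ∈ I • (⊤ : Submodule R M) := by
  rw [← (tensorQuotEquivQuotSMul M I).map_eq_zero_iff, ← map_one (Ideal.Quotient.mk I),
    tensorQuotEquivQuotSMul_tmul_mk, one_smul, Submodule.Quotient.mk_eq_zero]

theorem Module.Flat.iInf_smul_top {M : Type*} [AddCommGroup M] [Module R M] [Module.Flat R M]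
    {ι : Type*} [Finite ι] (I : ι → Ideal R) :
    (⨅ i, I i) • (⊤ : Submodule R M) = ⨅ i, I i • ⊤ := by
  cases nonempty_fintype ι
  classical
  refine le_antisymm (le_iInf fun i ↦ Submodule.smul_mono_left (iInf_le I i)) fun x hx ↦ ?_
  let g : (R ⧸ ⨅ i, I i) →ₐ[R] ∀ i, R ⧸ I i :=
    { Ideal.quotientInfToPiQuotient I with commutes' := fun _ ↦ rfl }
  have hg : Function.Injective (g.toLinearMap.lTensor M) :=
    Module.Flat.lTensor_preserves_injective_linearMap _ (Ideal.quotientInfToPiQuotient_inj I)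
  rw [← tmul_one_quotient_eq_zero_iff, ← hg.eq_iff, map_zero, LinearMap.lTensor_tmul]
  have hx : ∀ i, x ⊗ₜ[R] (1 : R ⧸ I i) = 0 := fun i ↦
    (tmul_one_quotient_eq_zero_iff (I i) x).2 (Submodule.mem_iInf _ |>.1 hx i)
  rw [AlgHom.toLinearMap_apply, map_one, ← piRight_symm_apply R R]
  simp_rw [Pi.one_apply, hx]
  exact map_zero _

theorem Ideal.map_iInf_of_flat {S : Type*} [CommRing S] [Algebra R S] [Module.Flat R S]
    {ι : Type*} [Finite ι] (I : ι → Ideal R) :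
    (⨅ i, I i).map (algebraMap R S) = ⨅ i, (I i).map (algebraMap R S) := by
  apply Submodule.restrictScalars_injective R
  simp only [← Ideal.smul_top_eq_map, Submodule.restrictScalars_iInf, Module.Flat.iInf_smul_top]

theorem Ideal.map_finset_inf_of_flat {S : Type*} [CommRing S] [Algebra R S] [Module.Flat R S]
    (s : Finset (Ideal R)) :
    (s.inf id).map (algebraMap R S) = s.inf (Ideal.map (algebraMap R S)) := by
  simp only [Finset.inf_eq_iInf, iInf_subtype', id_eq, Ideal.map_iInf_of_flat]

end Flat

section IntersectionCompatible

variable {R S : Type u} [CommRing R] [CommRing S] [Algebra R S] [Module.Flat R S]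

theorem finiteIntersections_image_map_of_flat (𝒬 : Set (Ideal R)) :
    finiteIntersections S (Ideal.map (algebraMap R S) '' 𝒬) =
      Ideal.map (algebraMap R S) '' finiteIntersections R 𝒬 := by
  classical
  ext I'
  constructor
  · rintro ⟨α', hne, hsub, rfl⟩
    obtain ⟨α, hα, rfl⟩ := Finset.subset_set_image_iff.1 hsub
    refine ⟨α.inf id, ⟨α, Finset.image_nonempty.1 hne, hα, rfl⟩, ?_⟩
    rw [Ideal.map_finset_inf_of_flat, Finset.inf_image, Function.id_comp]
  · rintro ⟨_, ⟨α, hne, hα, rfl⟩, rfl⟩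
    refine ⟨α.image (Ideal.map (algebraMap R S)), hne.image _, ?_, ?_⟩
    · simpa using Set.image_mono hα
    · rw [Ideal.map_finset_inf_of_flat, Finset.inf_image, Function.id_comp]

theorem IsIntersectionCompatible.image_map_of_flat {𝒬 : Set (Ideal R)}
    (h : IsIntersectionCompatible R 𝒬) :
    IsIntersectionCompatible S (Ideal.map (algebraMap R S) '' 𝒬) := by
  intro I' hI' J' hJ'
  rw [finiteIntersections_image_map_of_flat] at hI' hJ' ⊢
  obtain ⟨I, hI, rfl⟩ := hI'
  obtain ⟨J, hJ, rfl⟩ := hJ'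
  exact ⟨I + J, h I hI J hJ, Ideal.map_sup _ I J⟩

end IntersectionCompatible

open IsLocalRing in
theorem isIntersectionCompatible_map_adicCompletion_general (R : Type u) [CommRing R] [IsLocalRing R]
    (hexc : IsExcellentRing R) (𝒬 : Set (Ideal R))
    (hcompat : IsIntersectionCompatible R 𝒬) :
    IsIntersectionCompatible (AdicCompletion (maximalIdeal R) R)
      ((fun Q : Ideal R =>
        Q.map (algebraMap R (AdicCompletion (maximalIdeal R) R))) '' 𝒬) := by
  have : IsNoetherianRing R := hexc.1
  exact hcompat.image_map_of_flat

open IsLocalRing in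
/-- Intersection compatibility is preserved by extension to the `m`-adic completion of an
excellent local ring. -/
theorem isIntersectionCompatible_map_adicCompletion (R : Type u) [CommRing R] [IsLocalRing R]
    (hexc : IsExcellentRing R) (𝒬 : Set (Ideal R)) (h𝒬 : IsPseudoPrimeSystem R 𝒬)
    (hcompat : IsIntersectionCompatible R 𝒬) :
    IsIntersectionCompatible (AdicCompletion (maximalIdeal R) R)
      ((fun Q : Ideal R =>
        Q.map (algebraMap R (AdicCompletion (maximalIdeal R) R))) '' 𝒬) :=
  isIntersectionCompatible_map_adicCompletion_general R hexc 𝒬 hcompat
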